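/- Let m_l be a positive integer and β_l, θ, p_t, η_l > 0, α_l > 0, h ≥ 0, R₀ ≥ 0, R_l ≥ 0, c ≥ 0. Let G_l be a random variable with Gamma(m_l, 1/m_l) density m_l^{m_l} x^{m_l−1} e^{−m_l x}/Γ(m_l) on (0, ∞). Then 𝔼[ 1 − (1 − exp(−β_l m_l θ (p_t η_l G_l (R_l² + h²)^{−α_l/2} + c) · (p_t η_l (R₀² + h²)^{−α_l/2})^{−1}))^{m_l} ] = Σ_{k=1}^{m_l} C(m_l, k) (−1)^{k+1} exp(−k β_l m_l θ c (R₀² + h²)^{α_l/2}/(p_t η_l)) · (1 + k β_l θ (R_l² + h²)^{−α_l/2} (R₀² + h²)^{α_l/2})^{−m_l}. -/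

import Mathlib

/-!
Expanding `1 - (1 - e^{-y})^m` by the binomial theorem turns the expectation into a finite
alternating sum of terms `e^{-k y}`. The exponent `y` is affine in `G_l`, so each term is a
Laplace transform of the Gamma law, `∫ e^{-u x} dΓ(a, r) = (r / (r + u))^a`, which for
`a = r = m_l` and `u = k m_l s`, `s = β_l θ (R_l² + h²)^{-α_l/2} (R₀² + h²)^{α_l/2}`,
equals `(1 + k s)^{-m_l}`.
-/

open MeasureTheory ProbabilityTheory Real Finset

theorem one_sub_one_sub_pow {R : Type*} [CommRing R] (x : R) (n : ℕ) :
    1 - (1 - x) ^ n = ∑ k ∈ Icc 1 n, (n.choose k : R) * (-1) ^ (k + 1) * x ^ k := by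
  have binomial : (1 - x) ^ n = ∑ k ∈ range (n + 1), (-x) ^ k * (n.choose k : R) := by
    simpa [sub_eq_neg_add] using add_pow (-x) 1 n
  have termwise : ∀ k, (n.choose k : R) * (-1) ^ (k + 1) * x ^ k = -((-x) ^ k * n.choose k) :=
    fun k => by rw [neg_pow]; ring
  simp only [binomial, termwise, ← Ico_add_one_right_eq_Icc,
    sum_Ico_eq_sub _ (by omega : 1 ≤ n + 1), sum_neg_distrib, sum_range_one,
    pow_zero, Nat.choose_zero_right, Nat.cast_one, mul_one]
  ring

theorem ae_nonneg_gammaMeasure (a r : ℝ) : ∀ᵐ x ∂gammaMeasure a r, 0 ≤ x := by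
  simp only [ae_iff, not_le]
  change gammaMeasure a r (Set.Iio 0) = 0
  rw [gammaMeasure, withDensity_apply _ measurableSet_Iio]
  exact lintegral_gammaPDF_of_nonpos le_rfl

theorem integrable_exp_neg_mul_gammaMeasure {a r u : ℝ} (ha : 0 < a) (hr : 0 < r) (hu : 0 ≤ u) :
    Integrable (fun x => exp (-(u * x))) (gammaMeasure a r) := by
  have := isProbabilityMeasure_gammaMeasure ha hr
  refine (integrable_const 1).mono' (by fun_prop) ?_
  filter_upwards [ae_nonneg_gammaMeasure a r] with x hx
  rw [norm_of_nonneg (exp_pos _).le, exp_le_one_iff, neg_nonpos]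
  positivity

theorem integral_exp_neg_mul_gammaMeasure {a r u : ℝ} (ha : 0 < a) (hr : 0 < r)
    (hru : 0 < r + u) :
    ∫ x, exp (-(u * x)) ∂gammaMeasure a r = (r / (r + u)) ^ a := by
  have density : ∀ x, (gammaPDF a r x).toReal • exp (-(u * x))
      = (Set.Ici 0).indicator
          (fun x => r ^ a / Gamma a * (x ^ (a - 1) * exp (-((r + u) * x)))) x := by
    intro x
    rw [gammaPDF, ENNReal.toReal_ofReal (gammaPDFReal_nonneg ha hr x), smul_eq_mul, gammaPDFReal]
    by_cases hx : 0 ≤ x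
    · rw [if_pos hx, Set.indicator_of_mem (Set.mem_Ici.mpr hx), mul_assoc, mul_assoc, ← exp_add]
      ring_nf
    · rw [if_neg hx, Set.indicator_of_notMem (by simpa using hx), zero_mul]
  rw [gammaMeasure, integral_withDensity_eq_integral_toReal_smul
      (f := gammaPDF a r) (measurable_gammaPDFReal a r).ennreal_ofReal
      (ae_of_all _ fun _ => ENNReal.ofReal_lt_top),
    funext density, integral_indicator measurableSet_Ici, integral_Ici_eq_integral_Ioi,
    integral_const_mul, integral_rpow_mul_exp_neg_mul_Ioi ha hru,
    div_rpow hr.le hru.le, div_rpow zero_le_one hru.le, one_rpow]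
  field_simp [(Gamma_pos_of_pos ha).ne']

theorem integral_one_sub_one_sub_exp_pow_gammaMeasure {a r u : ℝ} (ha : 0 < a) (hr : 0 < r)
    (hu : 0 ≤ u) (t : ℝ) (n : ℕ) :
    ∫ x, (1 - (1 - exp (-(u * x + t))) ^ n) ∂gammaMeasure a r
      = ∑ k ∈ Icc 1 n,
          (n.choose k : ℝ) * (-1) ^ (k + 1) * exp (-(k * t)) * (r / (r + k * u)) ^ a := by
  have exp_pow : ∀ (k : ℕ) x, exp (-(u * x + t)) ^ k = exp (-(k * t)) * exp (-(k * u * x)) := by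
    intro k x
    rw [← exp_nat_mul, ← exp_add]
    ring_nf
  simp only [one_sub_one_sub_pow, exp_pow, ← mul_assoc]
  rw [integral_finsetSum _ fun k _ =>
    (integrable_exp_neg_mul_gammaMeasure ha hr (by positivity)).const_mul _]
  refine sum_congr rfl fun k _ => ?_
  rw [integral_const_mul, integral_exp_neg_mul_gammaMeasure ha hr (by positivity)]

theorem stmt_10_general (ml : ℕ) (hml : 0 < ml) (βl θ pt ηl αl : ℝ)
    (hβl : 0 < βl) (hθ : 0 < θ) (hpt : 0 < pt) (hηl : 0 < ηl)
    (h R₀ Rl c : ℝ)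
    {Ω : Type*} [MeasurableSpace Ω] (P : Measure Ω)
    (Gl : Ω → ℝ) (hGl : Measurable Gl)
    (hlaw : Measure.map Gl P = ProbabilityTheory.gammaMeasure (ml : ℝ) (ml : ℝ)) :
    ∫ ω, (1 - (1 - Real.exp (-(βl * (ml : ℝ) * θ *
            (pt * ηl * Gl ω * (Rl ^ 2 + h ^ 2) ^ (-(αl / 2)) + c) *
            (pt * ηl * (R₀ ^ 2 + h ^ 2) ^ (-(αl / 2)))⁻¹))) ^ ml) ∂P
      = ∑ k ∈ Finset.Icc 1 ml,
          (ml.choose k : ℝ) * (-1 : ℝ) ^ (k + 1) *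
            Real.exp (-((k : ℝ) * βl * (ml : ℝ) * θ * c * (R₀ ^ 2 + h ^ 2) ^ (αl / 2) /
              (pt * ηl))) *
            (1 + (k : ℝ) * βl * θ * (Rl ^ 2 + h ^ 2) ^ (-(αl / 2)) *
                (R₀ ^ 2 + h ^ 2) ^ (αl / 2)) ^ (-(ml : ℝ)) := by
  set A := (Rl ^ 2 + h ^ 2) ^ (-(αl / 2))
  set B := (R₀ ^ 2 + h ^ 2) ^ (αl / 2)
  set s := βl * θ * A * B
  set t := βl * ml * θ * c * B / (pt * ηl)
  have hm : (0 : ℝ) < ml := by exact_mod_cast hml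
  -- No case split on `R₀ ^ 2 + h ^ 2 = 0`: `rpow_neg` holds at base `0`, where `0⁻¹ = 0`.
  have inv : (pt * ηl * (R₀ ^ 2 + h ^ 2) ^ (-(αl / 2)))⁻¹ = B / (pt * ηl) := by
    rw [rpow_neg (by positivity), mul_inv, inv_inv, mul_comm, ← div_eq_mul_inv]
  have exponent : ∀ x, βl * ml * θ * (pt * ηl * x * A + c) *
      (pt * ηl * (R₀ ^ 2 + h ^ 2) ^ (-(αl / 2)))⁻¹ = ml * s * x + t := by
    intro x
    rw [inv]
    simp only [s, t]
    field_simp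
  simp only [exponent]
  rw [← integral_map (f := fun x => 1 - (1 - exp (-(ml * s * x + t))) ^ ml) hGl.aemeasurable
      (by fun_prop), hlaw, integral_one_sub_one_sub_exp_pow_gammaMeasure hm hm (by positivity)]
  refine sum_congr rfl fun k _ => ?_
  have hks : 0 < 1 + k * s := by positivity
  have ratio : (ml : ℝ) / (ml + k * (ml * s)) = (1 + k * s)⁻¹ := by
    field_simp
  rw [ratio, inv_rpow hks.le, ← rpow_neg hks.le]
  congr 3 <;> ring

/-- LoS–LoS term `κ_ll` of Lemma 5 as an exact identity for the surrogate model: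
`G_l` is the dominant LoS interferer's Gamma(m_l, 1/m_l) fading power, and the
expectation of the surrogate CCDF evaluates to the stated binomial sum. -/
theorem stmt_10 (ml : ℕ) (hml : 0 < ml) (βl θ pt ηl αl : ℝ)
    (hβl : 0 < βl) (hθ : 0 < θ) (hpt : 0 < pt) (hηl : 0 < ηl) (hαl : 0 < αl)
    (h R₀ Rl c : ℝ) (hh : 0 ≤ h) (hR₀ : 0 ≤ R₀) (hRl : 0 ≤ Rl) (hc : 0 ≤ c)
    {Ω : Type*} [MeasurableSpace Ω] (P : Measure Ω) [IsProbabilityMeasure P]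
    (Gl : Ω → ℝ) (hGl : Measurable Gl)
    (hlaw : Measure.map Gl P = ProbabilityTheory.gammaMeasure (ml : ℝ) (ml : ℝ)) :
    ∫ ω, (1 - (1 - Real.exp (-(βl * (ml : ℝ) * θ *
            (pt * ηl * Gl ω * (Rl ^ 2 + h ^ 2) ^ (-(αl / 2)) + c) *
            (pt * ηl * (R₀ ^ 2 + h ^ 2) ^ (-(αl / 2)))⁻¹))) ^ ml) ∂P
      = ∑ k ∈ Finset.Icc 1 ml,
          (ml.choose k : ℝ) * (-1 : ℝ) ^ (k + 1) *
            Real.exp (-((k : ℝ) * βl * (ml : ℝ) * θ * c * (R₀ ^ 2 + h ^ 2) ^ (αl / 2) /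
              (pt * ηl))) *
            (1 + (k : ℝ) * βl * θ * (Rl ^ 2 + h ^ 2) ^ (-(αl / 2)) *
                (R₀ ^ 2 + h ^ 2) ^ (αl / 2)) ^ (-(ml : ℝ)) :=
  stmt_10_general ml hml βl θ pt ηl αl hβl hθ hpt hηl h R₀ Rl c P Gl hGl hlaw
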